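/- arXiv:1608.03689 — 3 statements merged into one kernel-verified Lean document; each statement's English description precedes it below -/
import Mathlib

section
/- For any two finite simple directed graphs G and F without self-loops on nonempty finite vertex sets, the broadcast rate is multiplicative under the lexicographic product: β(G ∘ F) = β(G) · β(F). -/
namespace IC

/-- A `(t, r)` index code (with per-message lengths `t j` bits and index length
`r` bits) exists for the directed graph with edge relation `E` on vertex set `V`:
there are an encoder `φ` and, for each node `j`, a decoder `ψ j` that recovers
message `x j` from the index `φ x` and the side information `(x i)_{i ∈ A_j}`. -/
def HasCode {V : Type*} (E : V → V → Prop) (t : V → ℕ) (r : ℕ) : Prop :=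
  ∃ (φ : (∀ j : V, Fin (t j) → Fin 2) → (Fin r → Fin 2))
    (ψ : ∀ j : V, (Fin r → Fin 2) → (∀ i : {i : V // E i j}, Fin (t i.1) → Fin 2) →
      (Fin (t j) → Fin 2)),
    ∀ (x : ∀ j : V, Fin (t j) → Fin 2) (j : V),
      ψ j (φ x) (fun i => x i.1) = x j

/-- The broadcast rate `β = inf { r/t : a (t, r) index code exists }`. -/
noncomputable def broadcastRate {V : Type*} (E : V → V → Prop) : ℝ :=
  sInf {ρ : ℝ | ∃ (t r : ℕ), 1 ≤ t ∧ HasCode E (fun _ => t) r ∧ ρ = (r : ℝ) / t}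

end IC
namespace IC

/-- The lexicographic product `G ∘ F` of two directed graphs. -/
def lexProd {V W : Type*} (GE : V → V → Prop) (FE : W → W → Prop) :
    V × W → V × W → Prop :=
  fun x y => GE x.1 y.1 ∨ (x.1 = y.1 ∧ FE x.2 y.2)

end IC

/-!
A `(t, r)` index code for `E` is the same thing as a proper coloring, with `2 ^ r` colors, of the
confusion graph on `t`-bit message tuples, in which two tuples are adjacent when some receiver
sees the same side information in both but must decode different messages.

Upper bound: color each `F`-block of a message tuple of `G ∘ F` by `tG` parallel copies of an
`F`-code, then read the colors as messages for `G` and use `rF` parallel copies of a `G`-code;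
this is a `(tG tF, rG rF)` code for `G ∘ F`.

Lower bound: let `a` be the independence number of the confusion graph of `F` on `t`-bit
messages, so `2 ^ (t |W|) / a` is within a factor `O(t |W|)` of its chromatic number (cover
by random translates of a maximum independent set). Given a `(t, r)` code for `G ∘ F`, the blocks
at `v` compatible with the index and with the side information coming from `G` are independent
for `F`. A random map from `T`-bit strings to blocks, with `2 ^ T ≈ 2 ^ (t |W|) / a`, meets
each such set in at most `ℓ = O(r + t |V| |W|)` points, which turns the code into a
`(T, r + |V| log ℓ)` code for `G`. Hence `β(G) (t β(F) - O(log ℓ)) ≤ r + O(|V| log ℓ)`;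
applied to the `2 ^ j`-fold repetition of the code, the logarithmic terms vanish as `j → ∞`.
-/

namespace IC

open Finset SimpleGraph Filter Topology

variable {V W Y Z α β γ : Type*}

abbrev Bits (t : ℕ) := Fin t → Fin 2

def confusionGraph (E : V → V → Prop) (α : Type*) : SimpleGraph (V → α) where
  Adj x y := ∃ j, (∀ i, E i j → x i = y i) ∧ x j ≠ y j
  symm := ⟨fun _ _ ⟨j, hside, hj⟩ => ⟨j, fun i hi => (hside i hi).symm, hj.symm⟩⟩
  loopless := ⟨fun _ ⟨_, _, hj⟩ => hj rfl⟩

theorem hasCode_iff_colorable (E : V → V → Prop) (t r : ℕ) :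
    HasCode E (fun _ => t) r ↔ (confusionGraph E (Bits t)).Colorable (2 ^ r) := by
  constructor
  · rintro ⟨φ, ψ, hψ⟩
    refine (Coloring.mk φ fun {x y} hxy hφ => ?_).colorable.mono (by simp)
    obtain ⟨j, hside, hj⟩ := hxy
    have hside' : (fun i : {i // E i j} => x i) = fun i : {i // E i j} => y i :=
      funext fun i => hside i i.2
    exact hj (by rw [← hψ x j, ← hψ y j, hφ, hside'])
  · rintro ⟨C⟩
    classical
    let code : (V → Bits t) → Bits r := fun x => finFunctionFinEquiv.symm (C x)
    have hcode : ∀ {x y}, (confusionGraph E (Bits t)).Adj x y → code x ≠ code y :=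
      fun h hxy => C.valid h (finFunctionFinEquiv.symm.injective hxy)
    refine ⟨code, fun j c side => if h : ∃ x, code x = c ∧ ∀ i : {i // E i j}, x i = side i
      then h.choose j else 0, fun x j => ?_⟩
    have hx : ∃ x', code x' = code x ∧ ∀ i : {i // E i j}, x' i = x i :=
      ⟨x, rfl, fun _ => rfl⟩
    simp only [dif_pos hx]
    obtain ⟨hc, hside⟩ := hx.choose_spec
    by_contra hne
    exact hcode ⟨j, fun i hi => hside ⟨i, hi⟩, hne⟩ hc

def confusionGraphHom (E : V → V → Prop) {f : α → β} (hf : Function.Injective f) :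
    confusionGraph E α →g confusionGraph E β where
  toFun x := f ∘ x
  map_rel' := fun ⟨j, hside, hj⟩ =>
    ⟨j, fun i hi => congrArg f (hside i hi), fun h => hj (hf h)⟩

theorem colorable_confusionGraph_of_card_le (E : V → V → Prop) [Fintype α] [Fintype β]
    (h : Fintype.card α ≤ Fintype.card β) {n : ℕ}
    (hβ : (confusionGraph E β).Colorable n) : (confusionGraph E α).Colorable n :=
  let f := (Function.Embedding.nonempty_of_card_le h).some
  hβ.of_hom (confusionGraphHom E f.injective)

theorem colorable_confusionGraph_pi {E : V → V → Prop} {n : ℕ} (k : ℕ)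
    (h : (confusionGraph E α).Colorable n) :
    (confusionGraph E (Fin k → α)).Colorable (n ^ k) := by
  obtain ⟨C⟩ := h
  refine (Coloring.mk (fun x i => C fun v => x v i) fun {x y} hxy hC => ?_).colorable.mono
    (by simp)
  obtain ⟨j, hside, hj⟩ := hxy
  obtain ⟨i, hi⟩ := Function.ne_iff.mp hj
  exact C.valid ⟨j, fun v hv => congrFun (hside v hv) i, hi⟩ (congrFun hC i)

theorem colorable_confusionGraph_lexProd {GE : V → V → Prop} {FE : W → W → Prop} {m n : ℕ}
    (hF : (confusionGraph FE α).Colorable m) (hG : (confusionGraph GE (Fin m)).Colorable n) :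
    (confusionGraph (lexProd GE FE) α).Colorable n := by
  obtain ⟨CF⟩ := hF
  obtain ⟨CG⟩ := hG
  refine ⟨Coloring.mk (fun X => CG fun v => CF fun w => X (v, w)) fun {X Y} hXY => ?_⟩
  obtain ⟨⟨v, w⟩, hside, hne⟩ := hXY
  refine CG.valid ⟨v, fun i hi => ?_, CF.valid ⟨w, fun w' hw' => ?_, hne⟩⟩
  · exact congrArg CF (funext fun w => hside (i, w) (Or.inl hi))
  · exact hside (v, w') (Or.inr ⟨rfl, hw'⟩)

theorem HasCode.mul {E : V → V → Prop} {t r : ℕ} (h : HasCode E (fun _ => t) r) (k : ℕ) :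
    HasCode E (fun _ => k * t) (k * r) := by
  rw [hasCode_iff_colorable] at h ⊢
  refine colorable_confusionGraph_of_card_le E (β := Fin k → Bits t) ?_
    ((colorable_confusionGraph_pi k h).mono ?_) <;>
    simp [← pow_mul, mul_comm]

theorem HasCode.lexProd {GE : V → V → Prop} {FE : W → W → Prop} {tG rG tF rF : ℕ}
    (hG : HasCode GE (fun _ => tG) rG) (hF : HasCode FE (fun _ => tF) rF) :
    HasCode (IC.lexProd GE FE) (fun _ => tG * tF) (rG * rF) := by
  rw [hasCode_iff_colorable] at hG hF ⊢
  have hF' := colorable_confusionGraph_of_card_le FE (α := Bits (tG * tF))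
    (β := Fin tG → Bits tF) (by simp [← pow_mul, mul_comm]) (colorable_confusionGraph_pi tG hF)
  have hG' := colorable_confusionGraph_of_card_le GE (α := Fin ((2 ^ rF) ^ tG))
    (β := Fin rF → Bits tG) (by simp [← pow_mul, mul_comm]) (colorable_confusionGraph_pi rF hG)
  exact (colorable_confusionGraph_lexProd hF' hG').mono (by simp [← pow_mul])

theorem broadcastRate_nonneg (E : V → V → Prop) : 0 ≤ broadcastRate E :=
  Real.sInf_nonneg (by rintro _ ⟨t, r, -, -, rfl⟩; positivity)

theorem broadcastRate_mul_le {E : V → V → Prop} {t r : ℕ} (h : HasCode E (fun _ => t) r) :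
    broadcastRate E * t ≤ r := by
  rcases t.eq_zero_or_pos with rfl | ht
  · simp
  rw [← le_div_iff₀ (by exact_mod_cast ht)]
  exact csInf_le ⟨0, by rintro _ ⟨t, r, -, -, rfl⟩; positivity⟩ ⟨t, r, ht, h, rfl⟩

theorem hasCode_one_card [Fintype V] (E : V → V → Prop) :
    HasCode E (fun _ => 1) (Fintype.card V) := by
  classical
  rw [hasCode_iff_colorable]
  exact (colorable_of_fintype _).mono (by simp)

theorem le_mul_broadcastRate [Fintype V] (E : V → V → Prop) {x c : ℝ} (hc : 0 ≤ c)
    (h : ∀ t r, 0 < t → HasCode E (fun _ => t) r → x * t ≤ c * r) :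
    x ≤ c * broadcastRate E := by
  rcases hc.eq_or_lt with rfl | hc
  · simpa using h 1 _ one_pos (hasCode_one_card E)
  rw [← div_le_iff₀' hc]
  refine le_csInf ⟨_, 1, _, le_rfl, hasCode_one_card E, rfl⟩ ?_
  rintro _ ⟨t, r, ht, hcode, rfl⟩
  rw [div_le_div_iff₀ hc (by exact_mod_cast ht)]
  simpa only [mul_comm _ c] using h t r ht hcode

theorem broadcastRate_lexProd_le [Fintype V] [Fintype W] (GE : V → V → Prop)
    (FE : W → W → Prop) :
    broadcastRate (lexProd GE FE) ≤ broadcastRate GE * broadcastRate FE := by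
  rw [mul_comm]
  refine le_mul_broadcastRate GE (broadcastRate_nonneg FE) fun tG rG _ hG => ?_
  rw [mul_comm _ (rG : ℝ)]
  refine le_mul_broadcastRate FE (Nat.cast_nonneg _) fun tF rF _ hF => ?_
  simpa [mul_assoc] using broadcastRate_mul_le (hG.lexProd hF)

theorem two_mul_pow_sub_le {N a c : ℕ} (hN : 0 < N) (ha : a ≤ N) (hc : N ≤ c * a) :
    2 * (N - a) ^ c ≤ N ^ c := by
  have hNR : (0 : ℝ) < N := by exact_mod_cast hN
  -- `(1 - a / N) ^ c ≤ exp (-c a / N) ≤ exp (-1) < 1 / 2`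
  have hsub : ((N - a : ℕ) : ℝ) ≤ N * Real.exp (-(a / N)) := by
    have := Real.add_one_le_exp (-(a / N : ℝ))
    rw [Nat.cast_sub ha]
    nlinarith [mul_div_cancel₀ (a : ℝ) hNR.ne']
  have hexp : Real.exp (-(a / N : ℝ)) ^ c ≤ Real.exp (-1) := by
    rw [← Real.exp_nat_mul, Real.exp_le_exp, mul_neg, neg_le_neg_iff, mul_div, le_div_iff₀ hNR]
    exact_mod_cast (one_mul N).trans_le hc
  have : ((N - a : ℕ) : ℝ) ^ c ≤ N ^ c / 2 := by
    calc ((N - a : ℕ) : ℝ) ^ c ≤ (N * Real.exp (-(a / N))) ^ c :=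
          pow_le_pow_left₀ (Nat.cast_nonneg _) hsub c
      _ ≤ N ^ c * Real.exp (-1) := by rw [mul_pow]; gcongr
      _ ≤ N ^ c / 2 := by
          rw [div_eq_mul_one_div]; gcongr; exact Real.exp_neg_one_lt_half.le
  exact_mod_cast (by linarith : (2 : ℝ) * ((N - a : ℕ) : ℝ) ^ c ≤ N ^ c)

theorem mul_pow_sub_lt_pow {N a c u : ℕ} (hN : 0 < N) (ha : a ≤ N) (hc : N ≤ c * a)
    (hu : N < 2 ^ u) : N * (N - a) ^ (c * u) < N ^ (c * u) := by
  rcases Nat.eq_zero_or_pos ((N - a) ^ (c * u)) with h0 | hpos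
  · rw [h0, mul_zero]; positivity
  calc N * (N - a) ^ (c * u) < 2 ^ u * (N - a) ^ (c * u) := Nat.mul_lt_mul_of_pos_right hu hpos
    _ = (2 * (N - a) ^ c) ^ u := by rw [mul_pow, pow_mul]
    _ ≤ (N ^ c) ^ u := Nat.pow_le_pow_left (two_mul_pow_sub_le hN ha hc) u
    _ = N ^ (c * u) := (pow_mul N c u).symm

theorem exists_add_mem_of_mul_pow_lt {X : Type*} [AddGroup X] [Fintype X] (A : Finset X)
    {k : ℕ} (h : Fintype.card X * (Fintype.card X - #A) ^ k < Fintype.card X ^ k) :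
    ∃ z : Fin k → X, ∀ x, ∃ i, x + z i ∈ A := by
  classical
  by_contra! hbad
  have hmiss (x : X) : #{z : Fin k → X | ∀ i, x + z i ∉ A} = (Fintype.card X - #A) ^ k := by
    have hA : #{y | x + y ∈ A} = #A := card_equiv (Equiv.addLeft x) (by simp)
    rw [← hA, ← card_compl, compl_filter, ← Fintype.card_piFinset_const]
    congr 1
    ext z
    simp [Fintype.mem_piFinset]
  have hcover : (univ : Finset (Fin k → X)) ⊆
      univ.biUnion fun x => {z : Fin k → X | ∀ i, x + z i ∉ A} := by
    intro z _
    obtain ⟨x, hx⟩ := hbad z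
    simpa using ⟨x, hx⟩
  have := (card_le_card hcover).trans card_biUnion_le
  simp only [hmiss, sum_const, card_univ, smul_eq_mul, Fintype.card_pi, prod_const,
    Fintype.card_fin] at this
  exact this.not_gt h

theorem colorable_of_isIndepSet_of_card_le {X : Type*} [AddGroup X] [Fintype X]
    (H : SimpleGraph X) (hH : ∀ x y z, H.Adj x y → H.Adj (x + z) (y + z)) {A : Finset X}
    (hA : H.IsIndepSet A) {c u : ℕ} (hc : Fintype.card X ≤ c * #A)
    (hu : Fintype.card X < 2 ^ u) :
    H.Colorable (c * u) := by
  classical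
  have hN : 0 < Fintype.card X := Fintype.card_pos_iff.mpr ⟨0⟩
  obtain ⟨z, hz⟩ := exists_add_mem_of_mul_pow_lt A
    (mul_pow_sub_lt_pow hN (card_le_univ A) hc hu)
  choose col hcol using hz
  refine ⟨Coloring.mk col fun {x y} hxy hcxy => ?_⟩
  have hy := hcol y
  rw [← hcxy] at hy
  exact hA (hcol x) hy (by simpa using H.ne_of_adj hxy) (hH x y _ hxy)

theorem confusionGraph_adj_add [AddGroup α] {E : V → V → Prop} {x y : V → α} (z : V → α)
    (h : (confusionGraph E α).Adj x y) : (confusionGraph E α).Adj (x + z) (y + z) := by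
  obtain ⟨j, hside, hj⟩ := h
  exact ⟨j, fun i hi => by simp [hside i hi], by simpa using hj⟩

theorem mul_broadcastRate_le_of_lt_indepNum_mul [Fintype W] (FE : W → W → Prop) {t p b : ℕ}
    (hp : 2 ^ (t * Fintype.card W) < (confusionGraph FE (Bits t)).indepNum * 2 ^ p)
    (hb : t * Fintype.card W + 1 ≤ 2 ^ b) :
    t * broadcastRate FE ≤ p + b := by
  classical
  obtain ⟨A, hA⟩ := (confusionGraph FE (Bits t)).exists_isNIndepSet_indepNum
  have hcard : Fintype.card (W → Bits t) = 2 ^ (t * Fintype.card W) := by simp [← pow_mul]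
  have hcol := colorable_of_isIndepSet_of_card_le (confusionGraph FE (Bits t))
    (fun x y z => confusionGraph_adj_add z) hA.isIndepSet
    (c := 2 ^ p) (u := t * Fintype.card W + 1)
    (by rw [hcard, hA.card_eq, mul_comm (2 ^ p)]; exact hp.le)
    (by rw [hcard]; exact Nat.pow_lt_pow_right one_lt_two (Nat.lt_succ_self _))
  have hcode : HasCode FE (fun _ => t) (p + b) := by
    rw [hasCode_iff_colorable, pow_add]
    exact hcol.mono (Nat.mul_le_mul_left _ hb)
  have := broadcastRate_mul_le hcode
  push_cast at this
  linarith

theorem card_filter_forall_mem {Y X : Type*} [Fintype Y] [DecidableEq Y] [Fintype X]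
    [DecidableEq X] (I : Finset Y) (L : Finset X) :
    #{e : Y → X | ∀ y ∈ I, e y ∈ L} = #L ^ #I * Fintype.card X ^ (Fintype.card Y - #I) := by
  have : ({e : Y → X | ∀ y ∈ I, e y ∈ L} : Finset _) =
      Fintype.piFinset fun y => if y ∈ I then L else univ := by
    ext e
    simp only [mem_filter, mem_univ, true_and, Fintype.mem_piFinset]
    exact forall_congr' fun y => by split_ifs with hy <;> simp [hy]
  rw [this, Fintype.card_piFinset, prod_apply_ite, prod_const, prod_const, filter_mem_eq_inter,
    univ_inter, filter_not, filter_mem_eq_inter, univ_inter, ← compl_eq_univ_sdiff, card_compl,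
    card_univ]

theorem mul_choose_mul_lt_pow {N K a c l : ℕ} (hN : 0 < N) (hc : c < 2 ^ l)
    (haK : 2 * a * K ≤ N) : c * K.choose (l + 1) * (a ^ (l + 1) * N ^ (K - (l + 1))) < N ^ K := by
  rcases lt_or_ge K (l + 1) with hK | hK
  · rw [Nat.choose_eq_zero_of_lt hK, mul_zero, zero_mul]; positivity
  have key : c * K.choose (l + 1) * a ^ (l + 1) < N ^ (l + 1) := by
    rcases Nat.eq_zero_or_pos (a * K) with h0 | hpos
    · rcases Nat.mul_eq_zero.mp h0 with rfl | rfl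
      · rw [zero_pow l.succ_ne_zero, mul_zero]; positivity
      · rw [Nat.choose_zero_succ, mul_zero, zero_mul]; positivity
    calc c * K.choose (l + 1) * a ^ (l + 1) ≤ c * (a * K) ^ (l + 1) := by
          rw [mul_pow, mul_assoc, mul_comm (a ^ _)]
          gcongr
          exact Nat.choose_le_pow K (l + 1)
      _ < 2 ^ (l + 1) * (a * K) ^ (l + 1) :=
          Nat.mul_lt_mul_of_pos_right (hc.trans (Nat.pow_lt_pow_succ one_lt_two)) (by positivity)
      _ = (2 * a * K) ^ (l + 1) := by ring
      _ ≤ N ^ (l + 1) := Nat.pow_le_pow_left haK _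
  calc c * K.choose (l + 1) * (a ^ (l + 1) * N ^ (K - (l + 1)))
      = c * K.choose (l + 1) * a ^ (l + 1) * N ^ (K - (l + 1)) := by ring
    _ < N ^ (l + 1) * N ^ (K - (l + 1)) := Nat.mul_lt_mul_of_pos_right key (by positivity)
    _ = N ^ K := by rw [← pow_add, Nat.add_sub_cancel' hK]

/-- Union bound over `j` and over the `(l + 1)`-subsets of `Y` that `e` maps into `L j`. -/
theorem exists_map_card_filter_mem_le {Y X J : Type*} [Fintype Y] [Fintype X] [Nonempty X]
    [Fintype J] [DecidableEq X] (L : J → Finset X) {a l : ℕ} (hL : ∀ j, #(L j) ≤ a)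
    (hJ : Fintype.card J < 2 ^ l) (haY : 2 * a * Fintype.card Y ≤ Fintype.card X) :
    ∃ e : Y → X, ∀ j, #{y | e y ∈ L j} ≤ l := by
  classical
  by_contra! hbad
  have hcover : (univ : Finset (Y → X)) ⊆ (univ ×ˢ powersetCard (l + 1) univ).biUnion
      fun p : J × Finset Y => {e : Y → X | ∀ y ∈ p.2, e y ∈ L p.1} := by
    intro e _
    obtain ⟨j, hj⟩ := hbad e
    obtain ⟨I, hI, hIcard⟩ := exists_subset_card_eq (Nat.succ_le_of_lt hj)
    simp only [mem_biUnion, mem_product, mem_univ, true_and, mem_powersetCard, subset_univ,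
      mem_filter]
    exact ⟨(j, I), hIcard, fun y hy => (mem_filter.mp (hI hy)).2⟩
  have hcount := (card_le_card hcover).trans card_biUnion_le
  rw [card_univ, Fintype.card_fun] at hcount
  refine (mul_choose_mul_lt_pow Fintype.card_pos hJ haY).not_ge (hcount.trans ?_)
  calc ∑ p ∈ univ ×ˢ powersetCard (l + 1) univ, #{e : Y → X | ∀ y ∈ p.2, e y ∈ L p.1}
      ≤ ∑ _p ∈ univ ×ˢ powersetCard (l + 1) (univ : Finset Y),
          a ^ (l + 1) * Fintype.card X ^ (Fintype.card Y - (l + 1)) := by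
        refine sum_le_sum fun p hp => ?_
        rw [card_filter_forall_mem, (mem_powersetCard.mp (mem_product.mp hp).2).2]
        gcongr
        exact hL _
    _ = _ := by simp [card_univ, mul_assoc]

theorem exists_injOn_of_card_le [Fintype Z] [Nonempty Z] {Q : Finset Y}
    (h : #Q ≤ Fintype.card Z) : ∃ f : Y → Z, Set.InjOn f Q := by
  obtain ⟨f⟩ := Function.Embedding.nonempty_of_card_le (α := (Q : Set Y)) (β := Z) (by simpa)
  exact Set.exists_injOn_iff_injective.mpr ⟨f, f.injective⟩

section Core

variable (GE : V → V → Prop) {FE : W → W → Prop}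

/-- The blocks that the copy of `F` at `v` may still have to decode after seeing the index `c`
and the blocks `b i` of the in-neighbours `i` of `v` in `G`. -/
def compatibleBlocks (C : (V × W → α) → γ) (v : V) (c : γ) (b : V → W → α) :
    Set (W → α) :=
  {s | ∃ X, C X = c ∧ (∀ i, GE i v → ∀ w, X (i, w) = b i w) ∧ ∀ w, X (v, w) = s w}

theorem compatibleBlocks_congr (C : (V × W → α) → γ) {v : V} {c : γ} {b b' : V → W → α}
    (hb : ∀ i, GE i v → b i = b' i) :
    compatibleBlocks GE C v c b = compatibleBlocks GE C v c b' :=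
  Set.ext fun _ => exists_congr fun _ => and_congr_right fun _ => and_congr_left fun _ =>
    forall₂_congr fun i hi => by rw [hb i hi]

theorem isIndepSet_compatibleBlocks (C : (confusionGraph (lexProd GE FE) α).Coloring γ) (v : V)
    (c : γ) (b : V → W → α) :
    (confusionGraph FE α).IsIndepSet (compatibleBlocks GE C v c b) := by
  rintro s ⟨X, hX, hXb, hXs⟩ s' ⟨X', hX', hX'b, hX's⟩ - ⟨w, hside, hw⟩
  refine C.valid ⟨(v, w), ?_, by simpa [hXs, hX's] using hw⟩ (hX.trans hX'.symm)
  rintro ⟨i, w'⟩ (hi | ⟨rfl, hw'⟩)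
  · rw [hXb i hi, hX'b i hi]
  · rw [hXs, hX's, hside w' hw']

/-- Send the index of the embedded tuple, and for each `v` the position of its message among
the few candidates that the index and the side information leave open. -/
theorem colorable_confusionGraph_of_lexProd [Fintype V] [Fintype γ] [Fintype Z] [Nonempty Z]
    (C : (confusionGraph (lexProd GE FE) α).Coloring γ) (e : Y → W → α)
    (he : ∀ v c b, ∃ f : Y → Z, Set.InjOn f (e ⁻¹' compatibleBlocks GE C v c b)) :
    (confusionGraph GE Y).Colorable (Fintype.card γ * Fintype.card Z ^ Fintype.card V) := by
  classical
  have hrank (S : Set Y) : ∃ g : Y → Z, (∃ f : Y → Z, Set.InjOn f S) → Set.InjOn g S := by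
    by_cases h : ∃ f : Y → Z, Set.InjOn f S
    · exact ⟨h.choose, fun _ => h.choose_spec⟩
    · exact ⟨fun _ => Classical.arbitrary Z, fun h' => (h h').elim⟩
  choose rank hrank using hrank
  let embed (x : V → Y) : V × W → α := fun p => e (x p.1) p.2
  let cand (x : V → Y) (v : V) : Set Y :=
    e ⁻¹' compatibleBlocks GE C v (C (embed x)) fun i => e (x i)
  have hcand (x : V → Y) (v : V) : x v ∈ cand x v :=
    ⟨embed x, rfl, fun _ _ _ => rfl, fun _ => rfl⟩
  refine (Coloring.mk (fun x => (C (embed x), fun v => rank (cand x v) (x v)))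
    fun {x y} hxy hcol => ?_).colorable.mono (by simp)
  obtain ⟨v, hside, hne⟩ := hxy
  obtain ⟨hC, hrank_eq⟩ := Prod.mk_inj.mp hcol
  have hcand_eq : cand x v = cand y v := by
    simp only [cand, hC]
    rw [compatibleBlocks_congr GE C fun i hi => congrArg e (hside i hi)]
  have hy := hcand y v
  have hrank_v := congrFun hrank_eq v
  rw [← hcand_eq] at hy hrank_v
  exact hne (hrank _ (he _ _ _) (hcand x v) hy hrank_v)

end Core

theorem HasCode.of_lexProd [Fintype V] [Fintype W] {GE : V → V → Prop} {FE : W → W → Prop}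
    {t r T b : ℕ} (h : HasCode (IC.lexProd GE FE) (fun _ => t) r)
    (hT : (confusionGraph FE (Bits t)).indepNum * 2 ^ (T + 1) ≤ 2 ^ (t * Fintype.card W))
    (hb : r + t * Fintype.card W * Fintype.card V + Fintype.card V ≤ 2 ^ b) :
    HasCode GE (fun _ => T) (r + Fintype.card V * b) := by
  classical
  rw [hasCode_iff_colorable] at h ⊢
  obtain ⟨C⟩ := h
  let L (j : V × Fin (2 ^ r) × (V → W → Bits t)) : Finset (W → Bits t) :=
    {s | s ∈ compatibleBlocks GE C j.1 j.2.1 j.2.2}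
  have hL (j) : #(L j) ≤ (confusionGraph FE (Bits t)).indepNum := IsIndepSet.card_le_indepNum
    (by simpa [L] using isIndepSet_compatibleBlocks GE C j.1 j.2.1 j.2.2)
  have hJ : Fintype.card (V × Fin (2 ^ r) × (V → W → Bits t)) <
      2 ^ (r + t * Fintype.card W * Fintype.card V + Fintype.card V) := by
    simp only [Fintype.card_prod, Fintype.card_fin, Fintype.card_fun, ← pow_mul, pow_add]
    rw [mul_comm]
    exact Nat.mul_lt_mul_of_pos_left Nat.lt_two_pow_self (by positivity)
  have haY : 2 * (confusionGraph FE (Bits t)).indepNum * Fintype.card (Bits T) ≤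
      Fintype.card (W → Bits t) := by
    simpa [← pow_mul, pow_succ, mul_comm, mul_left_comm, mul_assoc] using hT
  obtain ⟨e, he⟩ := exists_map_card_filter_mem_le L hL hJ haY
  refine (colorable_confusionGraph_of_lexProd GE C e (Z := Bits b) fun v c x => ?_).mono ?_
  · have := exists_injOn_of_card_le (Z := Bits b) ((he (v, c, x)).trans (hb.trans_eq (by simp)))
    simpa [L, Set.preimage] using this
  · simp [pow_add, ← pow_mul, mul_comm]

theorem exists_mul_two_pow_le_lt {a N : ℕ} (ha : 0 < a) (haN : a ≤ N) :
    ∃ p, a * 2 ^ p ≤ N ∧ N < a * 2 ^ (p + 1) := by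
  have hdiv : N / a ≠ 0 := (Nat.div_pos haN ha).ne'
  refine ⟨Nat.log 2 (N / a), ?_, ?_⟩
  · exact (Nat.mul_le_mul_left a (Nat.pow_log_le_self 2 hdiv)).trans (Nat.mul_div_le N a)
  · exact (Nat.lt_mul_div_succ N ha).trans_le
      (Nat.mul_le_mul_left a (Nat.lt_pow_succ_log_self one_lt_two _))

theorem le_of_forall_mul_two_pow_le {x y C D : ℝ}
    (h : ∀ j : ℕ, x * 2 ^ j ≤ y * 2 ^ j + C * (j + D)) : x ≤ y := by
  have hlim : Tendsto (fun j : ℕ => C * ((j : ℝ) ^ 1 / 2 ^ j + D * (1 / 2) ^ j)) atTop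
      (𝓝 (C * (0 + D * 0))) :=
    ((tendsto_pow_const_div_const_pow_of_one_lt 1 one_lt_two).add
      ((tendsto_pow_atTop_nhds_zero_of_lt_one (by norm_num) (by norm_num)).const_mul D)).const_mul
        C
  simp only [mul_zero, add_zero] at hlim
  refine sub_nonpos.mp (ge_of_tendsto' hlim fun j => ?_)
  rw [pow_one, one_div_pow, mul_one_div, ← add_div, ← mul_div_assoc,
    le_div_iff₀ (by positivity)]
  linarith [h j]

theorem broadcastRate_mul_sub_le [Fintype V] [Fintype W] {GE : V → V → Prop}
    {FE : W → W → Prop} {t r b : ℕ} (h : HasCode (lexProd GE FE) (fun _ => t) r)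
    (hb : r + (t * Fintype.card W + 1) * (Fintype.card V + 1) ≤ 2 ^ b) :
    broadcastRate GE * (t * broadcastRate FE - (b + 2)) ≤ r + Fintype.card V * b := by
  classical
  set H := confusionGraph FE (Bits t)
  have ha : 0 < H.indepNum :=
    (IsIndepSet.card_le_indepNum (t := {0}) (by simp [IsIndepSet])).trans_lt' one_pos
  have haN : H.indepNum ≤ 2 ^ (t * Fintype.card W) := by
    obtain ⟨A, hA⟩ := H.exists_isNIndepSet_indepNum
    simpa [← hA.card_eq, ← pow_mul] using card_le_univ A
  obtain ⟨p, hp, hp'⟩ := exists_mul_two_pow_le_lt ha haN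
  have hβF := mul_broadcastRate_le_of_lt_indepNum_mul FE hp' (b := b)
    (((Nat.le_mul_of_pos_right _ (Fintype.card V).succ_pos).trans (Nat.le_add_left _ _)).trans hb)
  have hβG := broadcastRate_nonneg GE
  rcases p with _ | T
  · refine (mul_nonpos_of_nonneg_of_nonpos hβG ?_).trans (by positivity)
    push_cast at hβF
    linarith
  have hG := broadcastRate_mul_le (HasCode.of_lexProd h hp (b := b) (by nlinarith))
  push_cast at hβF hG ⊢
  calc _ ≤ broadcastRate GE * T := mul_le_mul_of_nonneg_left (by linarith) hβG
    _ ≤ _ := hG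

theorem le_broadcastRate_lexProd [Fintype V] [Fintype W] (GE : V → V → Prop)
    (FE : W → W → Prop) :
    broadcastRate GE * broadcastRate FE ≤ broadcastRate (lexProd GE FE) := by
  rw [← one_mul (broadcastRate (lexProd GE FE))]
  refine le_mul_broadcastRate _ zero_le_one fun t r _ h => ?_
  set n := Fintype.card V
  set B := Nat.clog 2 (r + (t * Fintype.card W + 1) * (n + 1))
  refine le_of_forall_mul_two_pow_le (C := n + broadcastRate GE) (D := B + 2) fun j => ?_
  have hb : 2 ^ j * r + (2 ^ j * t * Fintype.card W + 1) * (n + 1) ≤ 2 ^ (j + B) := by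
    calc _ ≤ 2 ^ j * (r + (t * Fintype.card W + 1) * (n + 1)) := by
          nlinarith [Nat.one_le_two_pow (n := j)]
      _ ≤ 2 ^ j * 2 ^ B := Nat.mul_le_mul_left _ (Nat.le_pow_clog one_lt_two _)
      _ = 2 ^ (j + B) := (pow_add 2 j B).symm
  have := broadcastRate_mul_sub_le (h.mul (2 ^ j)) hb
  have hβG := broadcastRate_nonneg GE
  push_cast at this ⊢
  nlinarith

end IC

theorem broadcastRate_lexProd_general
    {V W : Type} [Fintype V] [Fintype W]
    (GE : V → V → Prop)
    (FE : W → W → Prop) :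
    IC.broadcastRate (IC.lexProd GE FE) =
      IC.broadcastRate GE * IC.broadcastRate FE :=
  (IC.broadcastRate_lexProd_le GE FE).antisymm (IC.le_broadcastRate_lexProd GE FE)

/-- The broadcast rate is multiplicative under the
lexicographic product of directed side information graphs:
`β(G ∘ F) = β(G) · β(F)`. -/
theorem broadcastRate_lexProd
    {V W : Type} [Fintype V] [Fintype W] [Nonempty V] [Nonempty W]
    (GE : V → V → Prop) (hG : ∀ v, ¬ GE v v)
    (FE : W → W → Prop) (hF : ∀ w, ¬ FE w w) :
    IC.broadcastRate (IC.lexProd GE FE) =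
      IC.broadcastRate GE * IC.broadcastRate FE :=
  broadcastRate_lexProd_general GE FE
end

section
/- Let G be an index coding instance on n ≥ 1 messages. If G is critical, then for every edge e of G that does not belong to any unicycle of G, the MAIS outer bound is not tight for G_e: ℛ_MAIS(G_e) ≠ 𝒞(G_e). -/
namespace IC

/-- A rate tuple `R` is achievable: it is nonnegative and there is a
`(t_1, …, t_n, r)` index code with `R j ≤ t j / r` for all `j`. -/
def Achievable {n : ℕ} (E : Fin n → Fin n → Prop) (R : Fin n → ℝ) : Prop :=
  (∀ j, 0 ≤ R j) ∧
  ∃ (t : Fin n → ℕ) (r : ℕ), (∀ j, 1 ≤ t j) ∧ 1 ≤ r ∧ HasCode E t r ∧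
    ∀ j, R j ≤ (t j : ℝ) / r

/-- The capacity region `𝒞(G)`: the closure of the set of achievable rate tuples. -/
noncomputable def capacityRegion {n : ℕ} (E : Fin n → Fin n → Prop) : Set (Fin n → ℝ) :=
  closure {R | Achievable E R}

end IC
namespace IC

/-- The graph obtained by removing the edge `(a, b)`. -/
def removeEdge {V : Type*} (E : V → V → Prop) (a b : V) : V → V → Prop :=
  fun x y => E x y ∧ ¬(x = a ∧ y = b)

/-- The subgraph induced on `S` contains a directed cycle. -/
def HasCycleIn {V : Type*} (E : V → V → Prop) (S : Set V) : Prop :=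
  ∃ (m : ℕ) (v : Fin (m + 2) → V), Function.Injective v ∧ (∀ i, v i ∈ S) ∧
    ∀ i, E (v i) (v (i + 1))

/-- The MAIS outer bound region `ℛ_MAIS(G)`. -/
def maisRegion {n : ℕ} (E : Fin n → Fin n → Prop) : Set (Fin n → ℝ) :=
  {R | (∀ j, 0 ≤ R j) ∧
    ∀ S : Finset (Fin n), ¬ HasCycleIn E ↑S → ∑ j ∈ S, R j ≤ 1}

/-- The subgraph induced on `S` is a unicycle: `|S| ≥ 2` and `S` admits an
enumeration `v_0, …, v_{m−1}` such that the edges of the induced subgraph are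
exactly the directed Hamiltonian cycle `v_0 → v_1 → ⋯ → v_{m−1} → v_0`. -/
def IsUnicycle {V : Type*} (E : V → V → Prop) (S : Set V) : Prop :=
  ∃ (m : ℕ) (v : Fin (m + 2) → V), Function.Injective v ∧ Set.range v = S ∧
    ∀ a b, a ∈ S → b ∈ S → (E a b ↔ ∃ i, v i = a ∧ v (i + 1) = b)

/-- The edge `(x, y)` belongs to a unicycle of the graph. -/
def InUnicycle {V : Type*} (E : V → V → Prop) (x y : V) : Prop :=
  E x y ∧ ∃ S : Set V, IsUnicycle E S ∧ x ∈ S ∧ y ∈ S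

end IC

/-!
Removing an edge can only shrink the capacity region, and the MAIS region is always an outer
bound: the messages of an acyclic set `S` can be recovered one source of `G|_S` at a time from
the index and the messages outside `S`, so the encoder is injective on them and
`∑_{j ∈ S} t_j ≤ r`. Every directed cycle of an induced subgraph contains a chordless one, i.e.
a unicycle; so if `e` lies on no unicycle, `G` and `G_e` have the same acyclic sets and
`ℛ_MAIS(G_e) = ℛ_MAIS(G)`. Tightness for `G_e` would then give
`𝒞(G) ⊆ ℛ_MAIS(G) = ℛ_MAIS(G_e) = 𝒞(G_e) ⊆ 𝒞(G)`, contradicting the criticality of `e`.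
-/

open Function

open Fin.CommRing in
theorem Fin.val_sub_lt_of_ne_add_one {m : ℕ} {p q : Fin (m + 1)} (h : q ≠ p + 1) :
    (p - q).val < m := by
  refine lt_of_le_of_ne (Fin.is_le _) fun hm => h ?_
  have hlast : p - q = Fin.last m := Fin.ext hm
  linear_combination -hlast - Fin.last_add_one m

namespace IC

section Cycles

variable {V : Type*} {E : V → V → Prop}

open Fin.CommRing in
/-- A chord `v p → v q` of a closed walk `v` closes up the shorter walk `v q → ⋯ → v p`. -/
theorem exists_closedWalk_of_chord {m : ℕ} {v : Fin (m + 1) → V}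
    (hv : ∀ i, E (v i) (v (i + 1))) {p q : Fin (m + 1)} (hpq : E (v p) (v q)) :
    ∃ w : Fin ((p - q).val + 1) → V, Set.range w ⊆ Set.range v ∧ ∀ i, E (w i) (w (i + 1)) := by
  refine ⟨fun i => v (q + (i.val : Fin (m + 1))), ?_, fun i => ?_⟩
  · rintro _ ⟨i, rfl⟩
    exact ⟨_, rfl⟩
  · dsimp only
    rw [Fin.val_add_one]
    split_ifs with hi
    · rw [hi, Fin.val_last, Fin.cast_val_eq_self, add_sub_cancel, Nat.cast_zero, add_zero]
      exact hpq
    · rw [Nat.cast_succ, ← add_assoc]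
      exact hv _

theorem isUnicycle_range (hself : ∀ a, ¬ E a a) {m : ℕ} {v : Fin (m + 1) → V}
    (hv : ∀ i, E (v i) (v (i + 1))) (hchord : ∀ p q, E (v p) (v q) → q = p + 1) :
    IsUnicycle E (Set.range v) := by
  obtain ⟨m, rfl⟩ : ∃ k, m = k + 1 := Nat.exists_eq_succ_of_ne_zero fun hm => by
    subst hm
    exact hself (v 0) (Subsingleton.elim (0 + 1 : Fin 1) 0 ▸ hv 0)
  have hinj : Injective v := fun p q hpq =>
    add_right_cancel (hchord q (p + 1) (hpq ▸ hv p))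
  refine ⟨m, v, hinj, rfl, ?_⟩
  rintro _ _ ⟨p, rfl⟩ ⟨q, rfl⟩
  exact ⟨fun h => ⟨p, rfl, by rw [hchord p q h]⟩, fun ⟨i, hi, hi'⟩ => hi ▸ hi' ▸ hv i⟩

/-- A closed walk of minimal length has no chords, so it is a unicycle. -/
theorem exists_isUnicycle_subset_range (hself : ∀ a, ¬ E a a) {m : ℕ} (v : Fin (m + 1) → V)
    (hv : ∀ i, E (v i) (v (i + 1))) : ∃ T ⊆ Set.range v, IsUnicycle E T := by
  induction m using Nat.strong_induction_on with
  | _ m ih =>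
    by_cases hchord : ∀ p q, E (v p) (v q) → q = p + 1
    · exact ⟨_, subset_rfl, isUnicycle_range hself hv hchord⟩
    push Not at hchord
    obtain ⟨p, q, hpq, hne⟩ := hchord
    obtain ⟨w, hwv, hw⟩ := exists_closedWalk_of_chord hv hpq
    obtain ⟨T, hTw, hT⟩ := ih _ (Fin.val_sub_lt_of_ne_add_one hne) w hw
    exact ⟨T, hTw.trans hwv, hT⟩

theorem HasCycleIn.mono {S S' : Set V} (h : HasCycleIn E S) (hS : S ⊆ S') :
    HasCycleIn E S' :=
  let ⟨m, v, hinj, hvS, hv⟩ := h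
  ⟨m, v, hinj, fun i => hS (hvS i), hv⟩

theorem IsUnicycle.hasCycleIn {T : Set V} (h : IsUnicycle E T) : HasCycleIn E T := by
  obtain ⟨m, v, hinj, rfl, hiff⟩ := h
  exact ⟨m, v, hinj, Set.mem_range_self, fun i =>
    (hiff _ _ (Set.mem_range_self _) (Set.mem_range_self _)).2 ⟨i, rfl, rfl⟩⟩

theorem hasCycleIn_iff_exists_isUnicycle (hself : ∀ a, ¬ E a a) {S : Set V} :
    HasCycleIn E S ↔ ∃ T ⊆ S, IsUnicycle E T := by
  refine ⟨fun ⟨_, v, _, hvS, hv⟩ => ?_, fun ⟨T, hTS, hT⟩ => hT.hasCycleIn.mono hTS⟩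
  obtain ⟨T, hTv, hT⟩ := exists_isUnicycle_subset_range hself v hv
  exact ⟨T, hTv.trans (Set.range_subset_iff.2 hvS), hT⟩

theorem hasCycleIn_of_closedWalk (hself : ∀ a, ¬ E a a) {S : Set V} {m : ℕ}
    (v : Fin (m + 1) → V) (hvS : ∀ i, v i ∈ S) (hv : ∀ i, E (v i) (v (i + 1))) :
    HasCycleIn E S := by
  obtain ⟨T, hTv, hT⟩ := exists_isUnicycle_subset_range hself v hv
  exact hT.hasCycleIn.mono (hTv.trans (Set.range_subset_iff.2 hvS))

theorem IsUnicycle.removeEdge {T : Set V} {x y : V} (h : IsUnicycle E T)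
    (hxy : ¬ InUnicycle E x y) : IsUnicycle (removeEdge E x y) T := by
  obtain ⟨m, v, hinj, hT, hiff⟩ := h
  refine ⟨m, v, hinj, hT, fun a b ha hb => ⟨fun hab => (hiff a b ha hb).1 hab.1, fun hab => ?_⟩⟩
  refine ⟨(hiff a b ha hb).2 hab, ?_⟩
  rintro ⟨rfl, rfl⟩
  exact hxy ⟨(hiff a b ha hb).2 hab, T, ⟨m, v, hinj, hT, hiff⟩, ha, hb⟩

theorem hasCycleIn_removeEdge_iff (hself : ∀ a, ¬ E a a) {x y : V}
    (hxy : ¬ InUnicycle E x y) {S : Set V} :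
    HasCycleIn (removeEdge E x y) S ↔ HasCycleIn E S := by
  refine ⟨fun ⟨m, v, hinj, hvS, hv⟩ => ⟨m, v, hinj, hvS, fun i => (hv i).1⟩, fun h => ?_⟩
  obtain ⟨T, hTS, hT⟩ := (hasCycleIn_iff_exists_isUnicycle hself).1 h
  exact (hT.removeEdge hxy).hasCycleIn.mono hTS

end Cycles

theorem exists_closedWalk_of_forall_pred {α : Type*} [Finite α] [Nonempty α]
    {R : α → α → Prop} (f : α → α) (hf : ∀ a, R (f a) a) :
    ∃ (m : ℕ) (v : Fin (m + 1) → α), ∀ i, R (v i) (v (i + 1)) := by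
  obtain ⟨x⟩ := ‹Nonempty α›
  obtain ⟨y, m, hy⟩ : ∃ y m, f^[m + 1] y = y := by
    obtain ⟨a, b, hne, hab⟩ := Finite.exists_ne_map_eq_of_infinite fun k => f^[k] x
    wlog hlt : a < b generalizing a b
    · exact this b a hne.symm hab.symm (by omega)
    refine ⟨f^[a] x, b - a - 1, ?_⟩
    rw [← iterate_add_apply, show b - a - 1 + 1 + a = b by omega]
    exact hab.symm
  -- the orbit of the periodic point `y`, traversed against `f`
  refine ⟨m, fun i => f^[m + 1 - i] y, fun i => ?_⟩
  dsimp only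
  rw [Fin.val_add_one]
  split_ifs with hi
  · rw [hi, Fin.val_last, Nat.sub_zero, hy, Nat.add_sub_cancel_left, iterate_one]
    exact hf y
  · rw [show m + 1 - i = m + 1 - (i + 1) + 1 by omega, iterate_succ_apply']
    exact hf _

section Decoding

variable {V : Type*} {E : V → V → Prop}

theorem exists_source_of_not_hasCycleIn (hself : ∀ a, ¬ E a a) {S : Finset V}
    (hS : ¬ HasCycleIn E ↑S) (hne : S.Nonempty) : ∃ j ∈ S, ∀ i ∈ S, ¬ E i j := by
  by_contra! h
  choose f hfS hf using h
  have : Nonempty S := hne.to_subtype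
  obtain ⟨m, v, hv⟩ := exists_closedWalk_of_forall_pred (R := fun a b : S => E a b)
    (fun j => ⟨f j j.2, hfS j j.2⟩) fun j => hf j j.2
  exact hS (hasCycleIn_of_closedWalk hself (fun i => (v i : V)) (fun i => (v i).2) hv)

/-- `hdec` abstracts the decoders: message `j` is a function of the index and the messages
that `j` has as side information. -/
theorem eq_of_encode_eq (hself : ∀ a, ¬ E a a) {β : V → Type*} {γ : Type*}
    {φ : (∀ j, β j) → γ}
    (hdec : ∀ x x' j, φ x = φ x' → (∀ i, E i j → x i = x' i) → x j = x' j)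
    {S : Finset V} (hS : ¬ HasCycleIn E ↑S) {x x' : ∀ j, β j} (hφ : φ x = φ x')
    (hout : ∀ i ∉ S, x i = x' i) : x = x' := by
  classical
  induction S using Finset.strongInduction with
  | H S ih =>
    rcases S.eq_empty_or_nonempty with rfl | hne
    · exact funext fun j => hout j (Finset.notMem_empty j)
    obtain ⟨j, hjS, hj⟩ := exists_source_of_not_hasCycleIn hself hS hne
    have hxj : x j = x' j := hdec x x' j hφ fun i hij => hout i fun hiS => hj i hiS hij
    refine ih (S.erase j) (Finset.erase_ssubset hjS)
      (fun hc => hS (hc.mono (Finset.coe_subset.2 (S.erase_subset j)))) fun i hi => ?_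
    by_cases hij : i = j
    · exact hij ▸ hxj
    · exact hout i fun hiS => hi (Finset.mem_erase.2 ⟨hij, hiS⟩)

theorem HasCode.sum_le (hself : ∀ a, ¬ E a a) {t : V → ℕ} {r : ℕ} (hcode : HasCode E t r)
    {S : Finset V} (hS : ¬ HasCycleIn E ↑S) : ∑ j ∈ S, t j ≤ r := by
  classical
  obtain ⟨φ, ψ, hψ⟩ := hcode
  let extend : (∀ j : S, Fin (t j) → Fin 2) → ∀ j, Fin (t j) → Fin 2 :=
    fun y j => if hj : j ∈ S then y ⟨j, hj⟩ else 0
  have hinj : Injective (φ ∘ extend) := by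
    intro y y' hyy
    have hdec : ∀ x x' j, φ x = φ x' → (∀ i, E i j → x i = x' i) → x j = x' j :=
      fun x x' j hφ hside => by
        rw [← hψ x j, ← hψ x' j, hφ]
        exact congrArg _ (funext fun i => hside i i.2)
    have hext := eq_of_encode_eq hself hdec hS hyy fun i hi => by simp [extend, hi]
    funext j
    simpa [extend] using congrFun hext j
  have hcard := Fintype.card_le_of_injective _ hinj
  simp only [Fintype.card_pi, Finset.prod_const, Finset.card_univ, Fintype.card_fin,
    Finset.prod_pow_eq_pow_sum, Finset.sum_coe_sort] at hcard
  exact (Nat.pow_le_pow_iff_right (by norm_num)).1 hcard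

theorem HasCode.mono {E' : V → V → Prop} (h : ∀ a b, E' a b → E a b) {t : V → ℕ} {r : ℕ}
    (hcode : HasCode E' t r) : HasCode E t r :=
  let ⟨φ, ψ, hψ⟩ := hcode
  ⟨φ, fun j c s => ψ j c fun i => s ⟨i, h _ _ i.2⟩, hψ⟩

end Decoding

section Regions

variable {n : ℕ} {E : Fin n → Fin n → Prop}

theorem capacityRegion_mono {E' : Fin n → Fin n → Prop} (h : ∀ a b, E' a b → E a b) :
    capacityRegion E' ⊆ capacityRegion E := by
  refine closure_mono ?_
  rintro R ⟨hR0, t, r, ht, hr, hcode, hRt⟩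
  exact ⟨hR0, t, r, ht, hr, hcode.mono h, hRt⟩

theorem isClosed_maisRegion : IsClosed (maisRegion E) := by
  simp only [maisRegion, Set.ofPred_and, Set.ofPred_forall]
  exact (isClosed_iInter fun j => isClosed_le continuous_const (continuous_apply j)).inter
    (isClosed_iInter fun S => isClosed_iInter fun _ =>
      isClosed_le (continuous_finsetSum _ fun i _ => continuous_apply i) continuous_const)

theorem capacityRegion_subset_maisRegion (hself : ∀ a, ¬ E a a) :
    capacityRegion E ⊆ maisRegion E := by
  refine closure_minimal ?_ isClosed_maisRegion
  rintro R ⟨hR0, t, r, -, hr, hcode, hRt⟩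
  refine ⟨hR0, fun S hS => ?_⟩
  have hrpos : (0 : ℝ) < r := by exact_mod_cast hr
  calc ∑ j ∈ S, R j ≤ ∑ j ∈ S, (t j : ℝ) / r := Finset.sum_le_sum fun j _ => hRt j
    _ = (∑ j ∈ S, t j : ℕ) / r := by push_cast; rw [Finset.sum_div]
    _ ≤ 1 := (div_le_one hrpos).2 (by exact_mod_cast hcode.sum_le hself hS)

theorem maisRegion_removeEdge (hself : ∀ a, ¬ E a a) {x y : Fin n}
    (hxy : ¬ InUnicycle E x y) : maisRegion (removeEdge E x y) = maisRegion E := by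
  ext R
  simp only [maisRegion, Set.mem_ofPred_eq, hasCycleIn_removeEdge_iff hself hxy]

end Regions

end IC

theorem mais_not_tight_of_critical_of_not_inUnicycle_general
    (n : ℕ)
    (E : Fin n → Fin n → Prop) (hE : ∀ i, ¬ E i i)
    (hcrit : ∀ x y, E x y →
      IC.capacityRegion (IC.removeEdge E x y) ≠ IC.capacityRegion E) :
    ∀ x y, E x y → ¬ IC.InUnicycle E x y →
      IC.maisRegion (IC.removeEdge E x y) ≠
        IC.capacityRegion (IC.removeEdge E x y) := by
  intro x y hxy hnu htight
  refine hcrit x y hxy ((IC.capacityRegion_mono fun _ _ h => h.1).antisymm ?_)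
  calc IC.capacityRegion E ⊆ IC.maisRegion E := IC.capacityRegion_subset_maisRegion hE
    _ = IC.maisRegion (IC.removeEdge E x y) := (IC.maisRegion_removeEdge hE hnu).symm
    _ = IC.capacityRegion (IC.removeEdge E x y) := htight

/-- If `G` is critical, then for every edge of `G` that does
not belong to any unicycle of `G`, the MAIS outer bound is not tight for the
graph with that edge removed. -/
theorem mais_not_tight_of_critical_of_not_inUnicycle
    (n : ℕ) (hn : 1 ≤ n)
    (E : Fin n → Fin n → Prop) (hE : ∀ i, ¬ E i i)
    (hcrit : ∀ x y, E x y →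
      IC.capacityRegion (IC.removeEdge E x y) ≠ IC.capacityRegion E) :
    ∀ x y, E x y → ¬ IC.InUnicycle E x y →
      IC.maisRegion (IC.removeEdge E x y) ≠
        IC.capacityRegion (IC.removeEdge E x y) :=
  mais_not_tight_of_critical_of_not_inUnicycle_general n E hE hcrit
end

section
/- Let G be a finite simple directed graph without self-loops on vertex set [n], and let G' be the spanning subgraph of G obtained by keeping exactly those edges of G that belong to a unicycle of G. Then the MAIS regions of G' and G coincide: ℛ_MAIS(G') = ℛ_MAIS(G). -/
/-! A shortest cycle of an irreflexive graph has no chords, so its vertex set induces a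
unicycle and all of its edges survive in `G'`; hence `G` and `G'` have the same acyclic
vertex sets. -/

namespace IC

variable {V : Type*} {E : V → V → Prop}

theorem HasCycleIn.mono_s17 {F : V → V → Prop} (hEF : ∀ x y, E x y → F x y) {S : Set V}
    (h : HasCycleIn E S) : HasCycleIn F S := by
  obtain ⟨m, v, hinj, hmem, hedge⟩ := h
  exact ⟨m, v, hinj, hmem, fun i => hEF _ _ (hedge i)⟩

/-- A chord `v a → v b` shortcuts the arc `v b → ⋯ → v a` into a shorter cycle. -/
theorem exists_shorter_cycle_of_chord {m : ℕ} {v : Fin (m + 2) → V}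
    (hinj : Function.Injective v) (hedge : ∀ i, E (v i) (v (i + 1)))
    {a b : Fin (m + 2)} (hab : E (v a) (v b)) (hne : a ≠ b) (hb : b ≠ a + 1) :
    ∃ k < m, ∃ w : Fin (k + 2) → V, Function.Injective w ∧ Set.range w ⊆ Set.range v ∧
      ∀ i, E (w i) (w (i + 1)) := by
  have hba : b + (a - b) = a := add_sub_cancel b a
  have hd_pos : (a - b).val ≠ 0 := fun h => hne (sub_eq_zero.mp (Fin.ext h))
  have hd_le : (a - b).val ≤ m := by
    by_contra! hd
    refine hb ?_
    have hd1 : a - b + 1 = 0 :=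
      Fin.ext (by simp [Fin.val_add, (show (a - b).val = m + 1 by omega)])
    rw [← hba, add_assoc, hd1, add_zero]
  obtain ⟨k, hk⟩ : ∃ k, (a - b).val = k + 1 := Nat.exists_eq_succ_of_ne_zero hd_pos
  have hle : k + 2 ≤ m + 2 := by omega
  refine ⟨k, by omega, fun i => v (b + Fin.castLE hle i), ?_, ?_, fun i => ?_⟩
  · exact fun i j hij => Fin.castLE_injective hle (add_left_cancel (hinj hij))
  · rintro _ ⟨i, rfl⟩
    exact ⟨_, rfl⟩
  · by_cases hi : i.val + 1 < k + 2
    · have hsucc : Fin.castLE hle (i + 1) = Fin.castLE hle i + 1 := by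
        ext
        simp only [Fin.val_castLE, Fin.val_add, Fin.val_one]
        rw [Nat.mod_eq_of_lt hi, Nat.mod_eq_of_lt (by omega)]
      simpa only [hsucc, ← add_assoc] using hedge (b + Fin.castLE hle i)
    · have hlast : i.val = k + 1 := by omega
      have h0 : Fin.castLE hle (i + 1) = 0 := by
        ext
        simp [Fin.val_add, hlast]
      have hi' : Fin.castLE hle i = a - b := Fin.ext (by simp [hlast, hk])
      simpa only [h0, hi', add_zero, hba] using hab

theorem isUnicycle_range_of_chordless {m : ℕ} {v : Fin (m + 2) → V}
    (hinj : Function.Injective v) (hedge : ∀ i, E (v i) (v (i + 1)))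
    (hchordless : ∀ a b, E (v a) (v b) → b = a + 1) : IsUnicycle E (Set.range v) := by
  refine ⟨m, v, hinj, rfl, ?_⟩
  rintro _ _ ⟨a, rfl⟩ ⟨b, rfl⟩
  refine ⟨fun hab => ⟨a, rfl, by rw [hchordless a b hab]⟩, ?_⟩
  rintro ⟨i, hi, hi'⟩
  rw [← hi, ← hi']
  exact hedge i

theorem HasCycleIn.exists_chordless (hE : ∀ x, ¬ E x x) {S : Set V} (h : HasCycleIn E S) :
    ∃ (m : ℕ) (v : Fin (m + 2) → V), Function.Injective v ∧ (∀ i, v i ∈ S) ∧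
      (∀ i, E (v i) (v (i + 1))) ∧ ∀ a b, E (v a) (v b) → b = a + 1 := by
  obtain ⟨m, v, hinj, hmem, hedge⟩ := h
  induction m using Nat.strong_induction_on with
  | _ m ih =>
    by_cases hchordless : ∀ a b, E (v a) (v b) → b = a + 1
    · exact ⟨m, v, hinj, hmem, hedge, hchordless⟩
    push Not at hchordless
    obtain ⟨a, b, hab, hb⟩ := hchordless
    have hne : a ≠ b := by
      rintro rfl
      exact hE _ hab
    obtain ⟨k, hk, w, hwinj, hwv, hwedge⟩ :=
      exists_shorter_cycle_of_chord hinj hedge hab hne hb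
    refine ih k hk w hwinj (fun i => ?_) hwedge
    obtain ⟨j, hj⟩ := hwv ⟨i, rfl⟩
    exact hj ▸ hmem j

theorem HasCycleIn.inUnicycle (hE : ∀ x, ¬ E x x) {S : Set V} (h : HasCycleIn E S) :
    HasCycleIn (fun x y => InUnicycle E x y) S := by
  obtain ⟨m, v, hinj, hmem, hedge, hchordless⟩ := h.exists_chordless hE
  have huni := isUnicycle_range_of_chordless hinj hedge hchordless
  exact ⟨m, v, hinj, hmem, fun i => ⟨hedge i, _, huni, ⟨i, rfl⟩, ⟨i + 1, rfl⟩⟩⟩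

theorem maisRegion_congr {n : ℕ} {E F : Fin n → Fin n → Prop}
    (h : ∀ S : Set (Fin n), HasCycleIn E S ↔ HasCycleIn F S) :
    maisRegion E = maisRegion F := by
  simp only [maisRegion, h]

end IC

/-- Let `G'` be the spanning subgraph of `G` keeping exactly
the edges that belong to a unicycle of `G`. Then `ℛ_MAIS(G') = ℛ_MAIS(G)`. -/
theorem maisRegion_unicycle_edges
    (n : ℕ) (E : Fin n → Fin n → Prop) (hE : ∀ i, ¬ E i i) :
    IC.maisRegion (fun x y => IC.InUnicycle E x y) = IC.maisRegion E :=
  IC.maisRegion_congr fun _ =>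
    ⟨IC.HasCycleIn.mono_s17 fun _ _ h => h.1, IC.HasCycleIn.inUnicycle hE⟩
end
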